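/- For every natural number n and every complex number z, the polynomial \mathcal{T}_n admits the expansion in powers of (z + n + 1): \mathcal{T}_n(z) = \sum_{k=0}^{n} \binom{n}{k} \mathcal{T}_{n-k}(k - n - 1) \, (z + n + 1)^k. -/

import Mathlib

open Finset

/-- The polynomial `𝒯 n z = ∑_{m=0}^{n} C(n,m) m^m (n-m+z)^(n-m)` (with `0^0 = 1`). -/
noncomputable def calT (n : ℕ) (z : ℂ) : ℂ :=
  ∑ m ∈ Finset.range (n + 1),
    (n.choose m : ℂ) * (m : ℂ) ^ m * (((n - m : ℕ) : ℂ) + z) ^ (n - m)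

/-! Writing `n - m + z = (z + n + 1) - (m + 1)` and expanding each power binomially in
`z + n + 1`, the coefficient of `(z + n + 1) ^ k` is, after `C(n,m) C(n-m,k) = C(n,k) C(n-k,m)`,
the value of `𝒯 (n - k)` at the point where its own shift `z + (n - k) + 1` vanishes. -/

theorem Nat.choose_mul_choose_sub_comm (n m k : ℕ) :
    n.choose m * (n - m).choose k = n.choose k * (n - k).choose m := by
  have hm := Nat.choose_mul (n := n) (Nat.le_add_right m k)
  have hk := Nat.choose_mul (n := n) (Nat.le_add_left k m)
  rw [Nat.add_sub_cancel_left] at hm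
  rw [Nat.add_sub_cancel] at hk
  rw [← hm, ← hk, Nat.choose_symm_add]

theorem sum_choose_mul_add_pow_eq_sum_pow {R : Type*} [CommSemiring R]
    (n : ℕ) (a c : ℕ → R) (w : R) :
    ∑ m ∈ range (n + 1), (n.choose m : R) * a m * (w + c m) ^ (n - m) =
      ∑ k ∈ range (n + 1), (n.choose k : R) *
        (∑ m ∈ range (n - k + 1), ((n - k).choose m : R) * a m * c m ^ (n - k - m)) * w ^ k := by
  calc
    _ = ∑ m ∈ range (n + 1), ∑ k ∈ range (n - m + 1),
          (n.choose m : R) * a m * (w ^ k * c m ^ (n - m - k) * ((n - m).choose k : R)) := by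
      simp_rw [add_pow, mul_sum]
    _ = ∑ k ∈ range (n + 1), ∑ m ∈ range (n - k + 1),
          (n.choose m : R) * a m * (w ^ k * c m ^ (n - m - k) * ((n - m).choose k : R)) :=
      sum_comm' fun m k => by simp only [mem_range]; omega
    _ = _ := by
      simp_rw [mul_sum, sum_mul]
      refine sum_congr rfl fun k _ => sum_congr rfl fun m _ => ?_
      have hchoose : (n.choose m : R) * ((n - m).choose k : R) =
          (n.choose k : R) * ((n - k).choose m : R) := by
        rw [← Nat.cast_mul, ← Nat.cast_mul, Nat.choose_mul_choose_sub_comm]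
      calc
        _ = (n.choose m : R) * ((n - m).choose k : R) * (a m * c m ^ (n - k - m) * w ^ k) := by
          rw [Nat.sub_right_comm n m k]
          ring
        _ = _ := by
          rw [hchoose]
          ring

theorem calT_eq_sum_shifted (n : ℕ) (z : ℂ) :
    calT n z = ∑ m ∈ range (n + 1),
      (n.choose m : ℂ) * (m : ℂ) ^ m * ((z + n + 1) + -((m : ℂ) + 1)) ^ (n - m) := by
  refine sum_congr rfl fun m hm => ?_
  rw [Nat.cast_sub (Nat.lt_succ_iff.mp (mem_range.mp hm))]
  ring

theorem calT_at_neg_succ (n : ℕ) :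
    calT n (-(n + 1)) = ∑ m ∈ range (n + 1),
      (n.choose m : ℂ) * (m : ℂ) ^ m * (-((m : ℂ) + 1)) ^ (n - m) := by
  simp [calT_eq_sum_shifted]

theorem calT_expansion_shifted (n : ℕ) (z : ℂ) :
    calT n z =
      ∑ k ∈ Finset.range (n + 1),
        (n.choose k : ℂ) * calT (n - k) ((k : ℂ) - n - 1) * (z + n + 1) ^ k := by
  rw [calT_eq_sum_shifted, sum_choose_mul_add_pow_eq_sum_pow]
  refine sum_congr rfl fun k hk => ?_
  have hpoint : (k : ℂ) - n - 1 = -(((n - k : ℕ) : ℂ) + 1) := by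
    rw [Nat.cast_sub (Nat.lt_succ_iff.mp (mem_range.mp hk))]
    ring
  rw [hpoint, calT_at_neg_succ]
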